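/- There is a sequence ε_N→0 such that for every N and every g:Γ_N→[0,∞), 𝔼[ Z_{N,g}² ] ≤ e^{2α}·(𝔼[Z_{N,g}])²·(1+ε_N), where α=β²(1−p)/(4p). -/

import Mathlib

open MeasureTheory Filter Finset
open scoped Classical ENNReal NNReal Topology

noncomputable section

namespace RDCW

/-- The real value of a Boolean spin. -/
def spin (b : Bool) : ℝ := if b then 1 else -1

/-- Spin configurations on `N` vertices. -/
abbrev Conf (N : ℕ) := Fin N → Bool

/-- Empirical magnetisation. -/
def mag {N : ℕ} (σ : Conf N) : ℝ := (N : ℝ)⁻¹ * ∑ i, spin (σ i)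

/-- The set `Γ_N` of attainable magnetisations. -/
def Gamma (N : ℕ) : Set ℝ := Set.range (fun σ : Conf N => mag σ)

/-- `Γ_N` as a finite set. -/
def GammaF (N : ℕ) : Finset ℝ :=
  Finset.image (fun σ : Conf N => mag σ) Finset.univ

/-- Configurations with magnetisation `m`, as a finset. -/
def level (N : ℕ) (m : ℝ) : Finset (Conf N) := Finset.univ.filter fun σ => mag σ = m

/-- Configurations with magnetisation `m`, as a set (`S_N[m]`). -/
def SLev (N : ℕ) (m : ℝ) : Set (Conf N) := {σ | mag σ = m}

/-- The entropy `I_N(m) = -(1/N) log |S_N[m]|`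
(for `m ∈ Γ_N` the cardinality is the binomial coefficient `C(N, (1+m)N/2)`). -/
def IN (N : ℕ) (m : ℝ) : ℝ := -(N : ℝ)⁻¹ * Real.log ((level N m).card)

/-- Two configurations differ by a single spin flip. -/
def Nbr {N : ℕ} (σ σ' : Conf N) : Prop :=
  (Finset.univ.filter fun i => σ i ≠ σ' i).card = 1

/-- The index set of the couplings: pairs `i < j`. -/
abbrev CIdx (N : ℕ) := {ij : Fin N × Fin N // ij.1 < ij.2}

/-- A realisation of the random couplings. -/
abbrev Couplings (N : ℕ) := CIdx N → Bool

/-- Real value of a coupling. -/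
def Jval {N : ℕ} (J : Couplings N) (e : CIdx N) : ℝ := if J e then 1 else 0

/-- The RDCW Hamiltonian. -/
def H (N : ℕ) (p h : ℝ) (J : Couplings N) (σ : Conf N) : ℝ :=
  -((N : ℝ) * p)⁻¹ * ∑ e : CIdx N, Jval J e * spin (σ e.1.1) * spin (σ e.1.2)
    - h * ∑ i, spin (σ i)

/-- The Curie--Weiss Hamiltonian. -/
def Hcw (N : ℕ) (h : ℝ) (σ : Conf N) : ℝ :=
  -(N : ℝ)⁻¹ * ∑ e : CIdx N, spin (σ e.1.1) * spin (σ e.1.2) - h * ∑ i, spin (σ i)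

/-- The centred random part `Δ` of the Hamiltonian. -/
def Delta (N : ℕ) (p : ℝ) (J : Couplings N) (σ : Conf N) : ℝ :=
  -((N : ℝ) * p)⁻¹ * ∑ e : CIdx N, (Jval J e - p) * spin (σ e.1.1) * spin (σ e.1.2)

/-- Partition function for a Hamiltonian. -/
def Z (N : ℕ) (β : ℝ) (Ham : Conf N → ℝ) : ℝ := ∑ σ : Conf N, Real.exp (-β * Ham σ)

/-- Gibbs measure for a Hamiltonian. -/
def gibbs (N : ℕ) (β : ℝ) (Ham : Conf N → ℝ) (σ : Conf N) : ℝ :=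
  Real.exp (-β * Ham σ) / Z N β Ham

/-- Off-diagonal Metropolis rates. -/
def flipP (N : ℕ) (β : ℝ) (Ham : Conf N → ℝ) (σ σ' : Conf N) : ℝ :=
  if Nbr σ σ' then (N : ℝ)⁻¹ * Real.exp (-β * max (Ham σ' - Ham σ) 0) else 0

/-- Metropolis (Glauber) transition probabilities. -/
def transP (N : ℕ) (β : ℝ) (Ham : Conf N → ℝ) (σ σ' : Conf N) : ℝ :=
  if σ' = σ then 1 - ∑ η ∈ Finset.univ.erase σ, flipP N β Ham σ η
  else flipP N β Ham σ σ'

/-- Probability of a finite trajectory of a Markov chain with kernel `P`. -/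
def pathProb {S : Type*} (P : S → S → ℝ) : S → List S → ℝ
  | _, [] => 1
  | x, y :: l => P x y * pathProb P y l

/-- `FirstHit A B l` says that the (time ≥ 1) trajectory `l` stays outside `A ∪ B`
until its final state, which belongs to `B`; this is the cylinder event
`{τ_B < τ_A, τ_B = l.length}`. -/
def FirstHit {S : Type*} (A B : Set S) : List S → Prop
  | [] => False
  | [x] => x ∈ B
  | x :: y :: l => x ∉ A ∧ x ∉ B ∧ FirstHit A B (y :: l)

/-- `ℙ_σ(τ_B < τ_A)` for the chain with kernel `P`. -/
def hitProb {S : Type*} (P : S → S → ℝ) (σ : S) (A B : Set S) : ℝ :=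
  ∑' l : List S, if FirstHit A B l then pathProb P σ l else 0

/-- `𝔼_σ[τ_B]` for the chain with kernel `P`. -/
def hitTimeExp {S : Type*} (P : S → S → ℝ) (σ : S) (B : Set S) : ℝ :=
  ∑' l : List S, if FirstHit (∅ : Set S) B l then (l.length : ℝ) * pathProb P σ l else 0

/-- The harmonic function `h_{A,B}`. -/
def harm {S : Type*} (P : S → S → ℝ) (A B : Set S) (σ : S) : ℝ :=
  if σ ∈ A then 1 else if σ ∈ B then 0 else hitProb P σ B A

/-- Capacity via the Dirichlet principle. -/
def capac (N : ℕ) (β : ℝ) (Ham : Conf N → ℝ) (A B : Set (Conf N)) : ℝ :=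
  sInf {x : ℝ | ∃ f : Conf N → ℝ, (∀ σ, 0 ≤ f σ ∧ f σ ≤ 1) ∧
    (∀ σ ∈ A, f σ = 1) ∧ (∀ σ ∈ B, f σ = 0) ∧
    x = ∑ σ : Conf N, ∑ σ' : Conf N,
      gibbs N β Ham σ * transP N β Ham σ σ' * (f σ - f σ') ^ 2}

/-- Bernoulli measure on `Bool`. -/
def bern (p : ℝ) : Measure Bool :=
  p.toNNReal • Measure.dirac true + (1 - p).toNNReal • Measure.dirac false

instance (p : ℝ) : IsFiniteMeasure (bern p) := by unfold bern; infer_instance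

/-- The joint law `ℙ_J` of the i.i.d. Bernoulli(p) couplings. -/
def PJ (N : ℕ) (p : ℝ) : Measure (Couplings N) := Measure.pi fun _ => bern p

/-- `E(m) = -m²/2 - hm`. -/
def Em (h m : ℝ) : ℝ := -m ^ 2 / 2 - h * m

/-- Transition probabilities of the Curie--Weiss magnetisation chain on `ℝ ⊇ Γ_N`. -/
def rCW (N : ℕ) (β h : ℝ) (m m' : ℝ) : ℝ :=
  if m' = m + 2 / N then Real.exp (-β * N * max (Em h m' - Em h m) 0) * ((1 - m) / 2)
  else if m' = m - 2 / N then Real.exp (-β * N * max (Em h m' - Em h m) 0) * ((1 + m) / 2)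
  else if m' = m then
    1 - Real.exp (-β * N * max (Em h (m + 2 / N) - Em h m) 0) * ((1 - m) / 2)
      - Real.exp (-β * N * max (Em h (m - 2 / N) - Em h m) 0) * ((1 + m) / 2)
  else 0

/-- The entropy `I(m)`. -/
def Ient (m : ℝ) : ℝ :=
  (1 - m) / 2 * Real.log ((1 - m) / 2) + (1 + m) / 2 * Real.log ((1 + m) / 2)

/-- The Curie--Weiss free energy `f_β(m) = E(m) + β⁻¹ I(m)`. -/
def fE (β h m : ℝ) : ℝ := Em h m + β⁻¹ * Ient m

/-- The double-well structure of `f_β` in the metastable regime `β > 1`, `h > 0` small: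
two local minima `m_- < 0 < m_+` and a local maximum `m* ∈ (m_-, m_+)`, all solving
`m = tanh(β(m+h))`, with `f_β(m_-) > f_β(m_+)`. -/
structure DoubleWell (β h mminus mstar mplus : ℝ) : Prop where
  lt_star : mminus < mstar
  star_lt : mstar < mplus
  neg : mminus < 0
  pos : 0 < mplus
  locmin_minus : IsLocalMin (fE β h) mminus
  locmin_plus : IsLocalMin (fE β h) mplus
  locmax_star : IsLocalMax (fE β h) mstar
  fix_minus : mminus = Real.tanh (β * (mminus + h))
  fix_star : mstar = Real.tanh (β * (mstar + h))
  fix_plus : mplus = Real.tanh (β * (mplus + h))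
  f_lt : fE β h mplus < fE β h mminus

/-- `y` is a point of `s` closest to `x`. -/
def ClosestIn (s : Set ℝ) (x y : ℝ) : Prop := y ∈ s ∧ ∀ z ∈ s, |x - y| ≤ |x - z|

/-- `α = β²(1-p)/(4p)`. -/
def alphaC (β p : ℝ) : ℝ := β ^ 2 * (1 - p) / (4 * p)

/-- `κ = α + sup_{η∈(0,1)} [log η - β √(2α + log(c₁/(1-η)²)) / (p √(2c₂))]`. -/
def kappaC (β p c₁ c₂ : ℝ) : ℝ :=
  alphaC β p + sSup ((fun η : ℝ => Real.log η -
      β * Real.sqrt (2 * alphaC β p + Real.log (c₁ / (1 - η) ^ 2)) /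
        (p * Real.sqrt (2 * c₂))) '' Set.Ioo (0 : ℝ) 1)

/-- Talagrand's concentration inequality with constants `c₁, c₂`: for every `M`, every
convex function `G` which is 1-Lipschitz w.r.t. the Euclidean norm, and independent
random variables `X₁, …, X_M` (jointly a product measure) bounded by `K`,
`ℙ(|G(X) - 𝔼 G(X)| ≥ tK) ≤ c₁ e^{-c₂ t²}`. -/
def IsTalagrand (c₁ c₂ : ℝ) : Prop :=
  ∀ (M : ℕ) (G : (Fin M → ℝ) → ℝ),
    ConvexOn ℝ Set.univ G →
    (∀ x y : Fin M → ℝ, |G x - G y| ≤ Real.sqrt (∑ i, (x i - y i) ^ 2)) →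
    ∀ (μ : Fin M → Measure ℝ) [∀ i, IsProbabilityMeasure (μ i)],
      ∀ K : ℝ, 0 < K → (∀ i, ∀ᵐ x ∂μ i, |x| ≤ K) →
        ∀ t : ℝ, 0 ≤ t →
          (Measure.pi μ {x | t * K ≤ |G x - ∫ y, G y ∂Measure.pi μ|}).toReal ≤
            c₁ * Real.exp (-c₂ * t ^ 2)

/-- `𝒵_{N,g}` (with `e^{-βΔ}`). -/
def Zg (N : ℕ) (p β : ℝ) (g : ℝ → ℝ) (J : Couplings N) : ℝ :=
  ∑ m ∈ GammaF N, g m * ∑ σ ∈ level N m, Real.exp (-β * Delta N p J σ)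

/-- The variant of `𝒵_{N,g}` with `e^{+βΔ}`. -/
def ZgPlus (N : ℕ) (p β : ℝ) (g : ℝ → ℝ) (J : Couplings N) : ℝ :=
  ∑ m ∈ GammaF N, g m * ∑ σ ∈ level N m, Real.exp (β * Delta N p J σ)

/-- `F_{N,g} = (1/N) log 𝒵_{N,g}`. -/
def Fg (N : ℕ) (p β : ℝ) (g : ℝ → ℝ) (J : Couplings N) : ℝ :=
  (N : ℝ)⁻¹ * Real.log (Zg N p β g J)

/-- `p_{N,g} = 𝔼[F_{N,g}]`. -/
def pg (N : ℕ) (p β : ℝ) (g : ℝ → ℝ) : ℝ := ∫ J, Fg N p β g J ∂PJ N p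

/-- `∑_{m∈Γ_N} g(m) e^{-N I_N(m)}`. -/
def entSum (N : ℕ) (g : ℝ → ℝ) : ℝ := ∑ m ∈ GammaF N, g m * Real.exp (-(N : ℝ) * IN N m)

/-- Mesoscopic measure `Q_{β,N}(m)`. -/
def Qmeso (N : ℕ) (β : ℝ) (Ham : Conf N → ℝ) (m : ℝ) : ℝ :=
  ∑ σ ∈ level N m, gibbs N β Ham σ

/-- `𝔼_{ν_{A,B}}[τ_B]`, where `ν_{A,B}` is the last-exit biased distribution on `A`. -/
def lastExitMeanHit (N : ℕ) (β : ℝ) (Ham : Conf N → ℝ) (A B : Set (Conf N)) : ℝ :=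
  (∑ σ ∈ Finset.univ.filter (· ∈ A),
      gibbs N β Ham σ * hitProb (transP N β Ham) σ A B * hitTimeExp (transP N β Ham) σ B) /
  (∑ σ ∈ Finset.univ.filter (· ∈ A), gibbs N β Ham σ * hitProb (transP N β Ham) σ A B)

/-- The unit flow `φ_N` on the magnetisation space. -/
def phiFlow (N : ℕ) (m₁ m₂ m m' : ℝ) : ℝ :=
  if m' = m + 2 / N ∧ m₁ ≤ m ∧ m ≤ m₂ - 2 / N then
    ((1 - m) * N / 2 * Real.exp (-(N : ℝ) * IN N m))⁻¹
  else if m' = m - 2 / N ∧ m₁ + 2 / N ≤ m ∧ m ≤ m₂ then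
    -((1 + m) * N / 2 * Real.exp (-(N : ℝ) * IN N m))⁻¹
  else 0

/-- `U_δ = {m ∈ [-1,1] : f_β(m) ≤ f_β(m_-) + δ}`. -/
def Uset (β h mminus δ : ℝ) : Set ℝ :=
  {m | m ∈ Set.Icc (-1 : ℝ) 1 ∧ fE β h m ≤ fE β h mminus + δ}

/-- `U_δ(m_+)`: the connected component of `U_δ` containing `m_+`. -/
def Ucomp (β h mminus mplus δ : ℝ) : Set ℝ := connectedComponentIn (Uset β h mminus δ) mplus

/-- The function `ℓ_N`. -/
def ellN (β h mpN x : ℝ) : ℝ :=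
  (1 / 2) * (x * (Real.log 2 + β * |2 - 2 * h| + 1)
    - (1 - mpN + x) * Real.log (1 - mpN + x) + (1 - mpN) * Real.log (1 - mpN))

/-- Specification of `δ_N`. -/
def DeltaNSpec (β h mminus mplus δ : ℝ) (N : ℕ) (d : ℝ) : Prop :=
  IsGreatest {d' : ℝ | 0 < d' ∧ d' ≤ δ ∧
    ∃ m ∈ Ucomp β h mminus mplus δ ∩ Gamma N, m < mplus ∧ fE β h m = fE β h mminus + d'} d

/-- Specification of `m_{δ_N}`: the left endpoint of `U_{δ_N}(m_+) ∩ Γ_N`,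
with `f_β(m_{δ_N}) = f_β(m_-) + δ_N`. -/
def MdeltaSpec (β h mminus mplus dN : ℝ) (N : ℕ) (x : ℝ) : Prop :=
  IsLeast (Ucomp β h mminus mplus dN ∩ Gamma N) x ∧ fE β h x = fE β h mminus + dN

/-- Specification of `ε_N`. -/
def EpsNSpec (β h mminus mplus dN ε : ℝ) (N : ℕ) (e : ℝ) : Prop :=
  IsGreatest {e' : ℝ | 0 < e' ∧ e' ≤ ε ∧
    ∃ m ∈ Ucomp β h mminus mplus dN ∩ Gamma N, m < mplus ∧ fE β h m = fE β h mplus + e'} e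

/-- Specification of `m_{ε_N}`. -/
def MepsSpec (β h mminus mplus dN eN : ℝ) (N : ℕ) (x : ℝ) : Prop :=
  x ∈ Ucomp β h mminus mplus dN ∩ Gamma N ∧ x < mplus ∧ fE β h x = fE β h mplus + eN

/-!
Expanding over configurations, `𝒵_{N,g} = ∑_σ w_σ exp(∑_e c_e(σ) (J_e - p))` with
`w_σ = g(m(σ)) ≥ 0` and `|c_e(σ)| = a := β/(Np)`. By independence of the couplings,
`𝔼 𝒵 = ∑_σ w_σ ∏_e φ(c_e(σ))`, where `φ` is the moment generating function of `J - p`, and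
`𝔼 𝒵²` is the analogous sum over pairs `(σ, τ)` with factors `φ(c_e(σ) + c_e(τ))`. On each edge
either `c_e(τ) = -c_e(σ)`, and then `φ(0) = 1 ≤ φ(c)φ(-c)` by Jensen, or `c_e(τ) = c_e(σ)`, and
then `φ(2c) - φ(c)² = Var e^{c(J-p)} ≤ p(1-p) a² e^{2a}`. So every edge costs at most a factor
`exp(p(1-p) a² e^{2a})`; over the at most `N²/2` edges this is `exp(2α e^{2a})`, and `a → 0`.
-/

lemma sq_exp_sub_exp_le (x y : ℝ) :
    (Real.exp x - Real.exp y) ^ 2 ≤ (x - y) ^ 2 * Real.exp (2 * max x y) := by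
  wlog hyx : y ≤ x generalizing x y
  · have h := this y x (le_of_not_ge hyx)
    rwa [max_comm, ← neg_sub x y, neg_sq, ← neg_sub (Real.exp x), neg_sq] at h
  have hdiff_nonneg : 0 ≤ Real.exp x - Real.exp y := by
    simpa only [sub_nonneg] using Real.exp_le_exp.mpr hyx
  have hdiff_le : Real.exp x - Real.exp y ≤ (x - y) * Real.exp x := by
    have h := mul_le_mul_of_nonneg_left (Real.add_one_le_exp (y - x)) (Real.exp_pos x).le
    rw [← Real.exp_add, add_sub_cancel] at h
    linarith
  calc (Real.exp x - Real.exp y) ^ 2 ≤ ((x - y) * Real.exp x) ^ 2 := by gcongr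
    _ = (x - y) ^ 2 * Real.exp (2 * max x y) := by
      rw [max_eq_left hyx, mul_pow, ← Real.exp_nat_mul]; norm_num

section Bernoulli

variable {p : ℝ}

lemma bern_singleton (b : Bool) : bern p {b} = ENNReal.ofReal (if b then p else 1 - p) := by
  cases b <;> simp [bern, ENNReal.ofReal, -Measure.coe_nnreal_smul]

lemma integral_bern (hp0 : 0 ≤ p) (hp1 : p ≤ 1) (f : Bool → ℝ) :
    ∫ b, f b ∂bern p = p * f true + (1 - p) * f false := by
  rw [integral_fintype .of_finite]
  simp [measureReal_def, bern_singleton, hp0, hp1, mul_comm]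

end Bernoulli

section CentredBernoulli

variable {p : ℝ}

def centredBernMGF (p c : ℝ) : ℝ := p * Real.exp (c * (1 - p)) + (1 - p) * Real.exp (-(c * p))

lemma integral_exp_centred_bern (hp0 : 0 ≤ p) (hp1 : p ≤ 1) (c : ℝ) :
    ∫ b, Real.exp (c * ((if b then 1 else 0) - p)) ∂bern p = centredBernMGF p c := by
  simp [integral_bern hp0 hp1, centredBernMGF]

@[simp]
lemma centredBernMGF_zero : centredBernMGF p 0 = 1 := by simp [centredBernMGF]

lemma one_le_centredBernMGF (hp0 : 0 ≤ p) (hp1 : p ≤ 1) (c : ℝ) : 1 ≤ centredBernMGF p c := by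
  have h₁ := mul_le_mul_of_nonneg_left (Real.add_one_le_exp (c * (1 - p))) hp0
  have h₂ := mul_le_mul_of_nonneg_left (Real.add_one_le_exp (-(c * p))) (sub_nonneg.mpr hp1)
  unfold centredBernMGF
  linarith

lemma centredBernMGF_add_self (c : ℝ) :
    centredBernMGF p (c + c) = centredBernMGF p c ^ 2
      + p * (1 - p) * (Real.exp (c * (1 - p)) - Real.exp (-(c * p))) ^ 2 := by
  simp only [centredBernMGF, add_mul, neg_add, Real.exp_add]
  ring

lemma sq_exp_sub_exp_centred_le (hp0 : 0 ≤ p) (hp1 : p ≤ 1) (c : ℝ) :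
    (Real.exp (c * (1 - p)) - Real.exp (-(c * p))) ^ 2 ≤ c ^ 2 * Real.exp (2 * |c|) := by
  have hmax : max (c * (1 - p)) (-(c * p)) ≤ |c| := by
    rcases le_total 0 c with hc | hc
    · rw [abs_of_nonneg hc]; exact max_le (by nlinarith) (by nlinarith)
    · rw [abs_of_nonpos hc]; exact max_le (by nlinarith) (by nlinarith)
  calc _ ≤ (c * (1 - p) - -(c * p)) ^ 2 * Real.exp (2 * max (c * (1 - p)) (-(c * p))) :=
        sq_exp_sub_exp_le _ _
    _ ≤ c ^ 2 * Real.exp (2 * |c|) := by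
        rw [show c * (1 - p) - -(c * p) = c by ring]
        gcongr

lemma centredBernMGF_add_le (hp0 : 0 ≤ p) (hp1 : p ≤ 1) {c c' : ℝ} (h : |c'| = |c|) :
    centredBernMGF p (c + c') ≤
      Real.exp (p * (1 - p) * c ^ 2 * Real.exp (2 * |c|)) *
        (centredBernMGF p c * centredBernMGF p c') := by
  set v := p * (1 - p) * c ^ 2 * Real.exp (2 * |c|)
  have hv : 0 ≤ v := by have := sub_nonneg.mpr hp1; positivity
  have hφ := one_le_centredBernMGF hp0 hp1
  rcases abs_eq_abs.mp h with hc' | hc' <;> rw [hc']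
  · have hvar : p * (1 - p) * (Real.exp (c * (1 - p)) - Real.exp (-(c * p))) ^ 2 ≤ v := by
      calc _ ≤ p * (1 - p) * (c ^ 2 * Real.exp (2 * |c|)) := by
            have := sub_nonneg.mpr hp1
            gcongr
            exact sq_exp_sub_exp_centred_le hp0 hp1 c
        _ = v := by ring
    have hsq : 1 ≤ centredBernMGF p c ^ 2 := one_le_pow₀ (hφ c)
    calc centredBernMGF p (c + c) ≤ centredBernMGF p c ^ 2 * (1 + v) := by
          rw [centredBernMGF_add_self]; nlinarith
      _ ≤ centredBernMGF p c ^ 2 * Real.exp v := by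
          gcongr; linarith [Real.add_one_le_exp v]
      _ = _ := by ring
  · rw [add_neg_cancel, centredBernMGF_zero]
    have hprod := one_le_mul_of_one_le_of_one_le (hφ c) (hφ (-c))
    exact hprod.trans (le_mul_of_one_le_left (by linarith) (Real.one_le_exp hv))

end CentredBernoulli

section BernoulliExpSum

variable {ι S : Type*} [Fintype ι] [Fintype S] {p : ℝ}

lemma prod_centredBernMGF_add_le (hp0 : 0 ≤ p) (hp1 : p ≤ 1) {a : ℝ} {c c' : ι → ℝ}
    (hc : ∀ e, |c e| = a) (hc' : ∀ e, |c' e| = a) :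
    ∏ e, centredBernMGF p (c e + c' e) ≤
      Real.exp (Fintype.card ι * (p * (1 - p) * a ^ 2 * Real.exp (2 * a))) *
        ((∏ e, centredBernMGF p (c e)) * ∏ e, centredBernMGF p (c' e)) := by
  calc ∏ e, centredBernMGF p (c e + c' e)
      ≤ ∏ e, Real.exp (p * (1 - p) * a ^ 2 * Real.exp (2 * a)) *
          (centredBernMGF p (c e) * centredBernMGF p (c' e)) := by
        gcongr with e
        · exact fun e _ => zero_le_one.trans (one_le_centredBernMGF hp0 hp1 _)
        · have h := centredBernMGF_add_le hp0 hp1 ((hc' e).trans (hc e).symm)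
          rwa [← sq_abs, hc e] at h
    _ = _ := by
        rw [Finset.prod_mul_distrib, Finset.prod_const, Finset.prod_mul_distrib,
          Finset.card_univ, ← Real.exp_nat_mul]

def bernExpSum (p : ℝ) (w : S → ℝ) (c : S → ι → ℝ) (x : ι → Bool) : ℝ :=
  ∑ s, w s * Real.exp (∑ e, c s e * ((if x e then 1 else 0) - p))

lemma bernExpSum_sq (w : S → ℝ) (c : S → ι → ℝ) (x : ι → Bool) :
    bernExpSum p w c x ^ 2 =
      bernExpSum p (fun st : S × S => w st.1 * w st.2) (fun st e => c st.1 e + c st.2 e) x := by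
  simp only [bernExpSum, sq, Fintype.sum_mul_sum, Fintype.sum_prod_type]
  refine Finset.sum_congr rfl fun s _ => Finset.sum_congr rfl fun t _ => ?_
  rw [mul_mul_mul_comm, ← Real.exp_add, ← Finset.sum_add_distrib]
  simp only [add_mul]

lemma integral_bernExpSum (hp0 : 0 ≤ p) (hp1 : p ≤ 1) (w : S → ℝ) (c : S → ι → ℝ) :
    ∫ x, bernExpSum p w c x ∂Measure.pi (fun _ => bern p) =
      ∑ s, w s * ∏ e, centredBernMGF p (c s e) := by
  unfold bernExpSum
  rw [integral_finsetSum _ fun s _ => .of_finite]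
  refine Finset.sum_congr rfl fun s _ => ?_
  simp only [Real.exp_sum]
  rw [integral_const_mul, integral_fintype_prod_eq_prod (μ := fun _ => bern p)
    (fun e b => Real.exp (c s e * ((if b then 1 else 0) - p)))]
  simp only [integral_exp_centred_bern hp0 hp1]

lemma integral_bernExpSum_sq_le (hp0 : 0 ≤ p) (hp1 : p ≤ 1) {w : S → ℝ} (hw : ∀ s, 0 ≤ w s)
    {a : ℝ} {c : S → ι → ℝ} (hc : ∀ s e, |c s e| = a) :
    ∫ x, bernExpSum p w c x ^ 2 ∂Measure.pi (fun _ => bern p) ≤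
      Real.exp (Fintype.card ι * (p * (1 - p) * a ^ 2 * Real.exp (2 * a))) *
        (∫ x, bernExpSum p w c x ∂Measure.pi (fun _ => bern p)) ^ 2 := by
  simp_rw [bernExpSum_sq, integral_bernExpSum hp0 hp1]
  set K := Real.exp (Fintype.card ι * (p * (1 - p) * a ^ 2 * Real.exp (2 * a)))
  calc ∑ st : S × S, w st.1 * w st.2 * ∏ e, centredBernMGF p (c st.1 e + c st.2 e)
      ≤ ∑ st : S × S, w st.1 * w st.2 *
          (K * ((∏ e, centredBernMGF p (c st.1 e)) * ∏ e, centredBernMGF p (c st.2 e))) := by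
        gcongr with st
        · exact mul_nonneg (hw _) (hw _)
        · exact prod_centredBernMGF_add_le hp0 hp1 (hc st.1) (hc st.2)
    _ = K * (∑ s, w s * ∏ e, centredBernMGF p (c s e)) ^ 2 := by
        rw [sq, Fintype.sum_mul_sum, Fintype.sum_prod_type, Finset.mul_sum]
        refine Finset.sum_congr rfl fun s _ => ?_
        rw [Finset.mul_sum]
        refine Finset.sum_congr rfl fun t _ => ?_
        ring

end BernoulliExpSum

lemma abs_spin_mul_spin (a b : Bool) : |spin a * spin b| = 1 := by
  cases a <;> cases b <;> simp [spin]

lemma two_mul_card_CIdx_le (N : ℕ) : 2 * Fintype.card (CIdx N) ≤ N ^ 2 := by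
  have hne (e e' : CIdx N) : e.1 ≠ e'.1.swap := fun h =>
    lt_asymm e.2 (by simpa [h] using e'.2)
  have hinj : Function.Injective
      (Sum.elim Subtype.val (Prod.swap ∘ Subtype.val) : CIdx N ⊕ CIdx N → Fin N × Fin N) := by
    rintro (e | e) (e' | e') h
    · exact congrArg Sum.inl (Subtype.val_injective h)
    · exact absurd h (hne e e')
    · exact absurd h.symm (hne e' e)
    · exact congrArg Sum.inr (Subtype.val_injective (Prod.swap_injective h))
  simpa [two_mul, sq] using Fintype.card_le_of_injective _ hinj

lemma Zg_eq_bernExpSum (N : ℕ) (p β : ℝ) (g : ℝ → ℝ) (J : Couplings N) :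
    Zg N p β g J = bernExpSum p (fun σ : Conf N => g (mag σ))
      (fun σ e => β / p / N * (spin (σ e.1.1) * spin (σ e.1.2))) J := by
  have hΔ (σ : Conf N) : -β * Delta N p J σ =
      ∑ e, β / p / N * (spin (σ e.1.1) * spin (σ e.1.2)) * ((if J e then 1 else 0) - p) := by
    rw [Delta, ← mul_assoc, Finset.mul_sum]
    refine Finset.sum_congr rfl fun e _ => ?_
    rw [Jval]
    ring
  rw [Zg, bernExpSum, ← Finset.sum_fiberwise_of_maps_to (g := mag) (t := GammaF N)
    fun σ _ => Finset.mem_image_of_mem mag (Finset.mem_univ σ)]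
  refine Finset.sum_congr rfl fun m _ => ?_
  rw [level, Finset.mul_sum]
  refine Finset.sum_congr rfl fun σ hσ => ?_
  rw [(Finset.mem_filter.mp hσ).2, hΔ]

lemma card_CIdx_mul_le {N : ℕ} {p : ℝ} (hp0 : 0 < p) (hp1 : p ≤ 1) (β : ℝ) :
    Fintype.card (CIdx N) * (p * (1 - p) * |β / p / N| ^ 2) ≤ 2 * alphaC β p := by
  rcases Nat.eq_zero_or_pos N with rfl | hN
  · have hα : 0 ≤ alphaC β p :=
      div_nonneg (mul_nonneg (sq_nonneg β) (sub_nonneg.mpr hp1)) (by positivity)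
    simpa using hα
  have hcard : (2 * Fintype.card (CIdx N) : ℝ) ≤ N ^ 2 := by exact_mod_cast two_mul_card_CIdx_le N
  have hN' : (0 : ℝ) < N := by exact_mod_cast hN
  rw [sq_abs, alphaC, div_pow, div_pow]
  field_simp
  nlinarith [mul_le_mul_of_nonneg_right hcard (by positivity : 0 ≤ β ^ 2 * (1 - p))]

theorem Zg_second_moment_general (p β : ℝ) (hp : 0 < p) (hp1 : p < 1) :
    ∃ ε : ℕ → ℝ, Tendsto ε atTop (𝓝 0) ∧
    ∀ (N : ℕ) (g : ℝ → ℝ), (∀ m ∈ GammaF N, 0 ≤ g m) →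
      ∫ J, (Zg N p β g J) ^ 2 ∂PJ N p ≤
        Real.exp (2 * alphaC β p) * (∫ J, Zg N p β g J ∂PJ N p) ^ 2 * (1 + ε N) := by
  let a : ℕ → ℝ := fun N => |β / p / N|
  refine ⟨fun N => Real.exp (2 * alphaC β p * (Real.exp (2 * a N) - 1)) - 1, ?_,
    fun N g hg => ?_⟩
  · have ha : Tendsto a atTop (𝓝 0) := by
      simpa using (tendsto_const_div_atTop_nhds_zero_nat (β / p)).abs
    have hcont : Continuous fun x : ℝ =>
        Real.exp (2 * alphaC β p * (Real.exp (2 * x) - 1)) - 1 := by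
      fun_prop
    simpa [Function.comp_def] using (hcont.tendsto 0).comp ha
  · have hw (σ : Conf N) : 0 ≤ g (mag σ) := hg _ (Finset.mem_image_of_mem mag (mem_univ σ))
    have hc (σ : Conf N) (e : CIdx N) :
        |β / p / N * (spin (σ e.1.1) * spin (σ e.1.2))| = a N := by
      rw [abs_mul, abs_spin_mul_spin, mul_one]
    simp_rw [PJ, Zg_eq_bernExpSum]
    calc _ ≤ _ := integral_bernExpSum_sq_le hp.le hp1.le hw hc
      _ ≤ Real.exp (2 * alphaC β p * Real.exp (2 * a N)) * _ := by
        refine mul_le_mul_of_nonneg_right (Real.exp_le_exp.mpr ?_) (sq_nonneg _)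
        calc _ = Fintype.card (CIdx N) * (p * (1 - p) * a N ^ 2) * Real.exp (2 * a N) := by ring
          _ ≤ _ := mul_le_mul_of_nonneg_right (card_CIdx_mul_le hp hp1.le β) (Real.exp_pos _).le
      _ = _ := by
        rw [add_sub_cancel, mul_right_comm (Real.exp (2 * alphaC β p)), ← Real.exp_add]
        congr 2
        ring

/-- second moment bound for `𝒵_{N,g}`. -/
theorem Zg_second_moment (p β : ℝ) (hp : 0 < p) (hp1 : p < 1) (hβ : 0 < β) :
    ∃ ε : ℕ → ℝ, Tendsto ε atTop (𝓝 0) ∧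
    ∀ (N : ℕ) (g : ℝ → ℝ), (∀ m ∈ GammaF N, 0 ≤ g m) →
      ∫ J, (Zg N p β g J) ^ 2 ∂PJ N p ≤
        Real.exp (2 * alphaC β p) * (∫ J, Zg N p β g J ∂PJ N p) ^ 2 * (1 + ε N) :=
  Zg_second_moment_general p β hp hp1

end RDCW
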